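/- Let p and q be coprime integers with p > q > 1. Then {ρ(w) : w labels a branch of the automaton S_{p/q} from 0} equals the topological closure in ℝ of the span-set Span = {span(n) : n ∈ ℕ}. -/

import Mathlib

/-- `w` labels a branch of the base-p/q automaton with digit set `E` from state `n`:
there are states `s 0 = n, s 1, s 2, …` with `q·s(k+1) = p·s k + w k` and `w k ∈ E`. -/
def IsBranch (p q : ℕ) (E : Set ℤ) (n : ℕ) (w : ℕ → ℤ) : Prop :=
  ∃ s : ℕ → ℕ, s 0 = n ∧ ∀ k : ℕ, (q : ℤ) * s (k + 1) = p * s k + w k ∧ w k ∈ E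

/-- `u` (a word of length `ℓ`) labels a path from `n` to `m` in the base-p/q automaton
with digit set `E`. -/
def IsPath (p q : ℕ) (E : Set ℤ) (n m ℓ : ℕ) (u : ℕ → ℤ) : Prop :=
  ∃ s : ℕ → ℕ, s 0 = n ∧ s ℓ = m ∧
    ∀ k < ℓ, (q : ℤ) * s (k + 1) = p * s k + u k ∧ u k ∈ E

/-- The canonical digit alphabet `A_p = {0, 1, …, p−1}`. -/
def Ap (p : ℕ) : Set ℤ := Set.Icc 0 ((p : ℤ) - 1)

/-- The lower alphabet `{0, 1, …, q−1}`. -/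
def LowAlph (q : ℕ) : Set ℤ := Set.Icc 0 ((q : ℤ) - 1)

/-- The upper alphabet `{p−q, …, p−1}`. -/
def UpAlph (p q : ℕ) : Set ℤ := Set.Icc ((p : ℤ) - q) ((p : ℤ) - 1)

/-- The alphabet `D = {p−2q+1, …, p−1}` of the automaton `S_{p/q}`. -/
def Dalph (p q : ℕ) : Set ℤ := Set.Icc ((p : ℤ) - 2 * q + 1) ((p : ℤ) - 1)

/-- Evaluation after the radix point: `ρ(w) = Σ_{i≥1} (w_i/q)·(q/p)^i`
(here `w k` is the `(k+1)`-st digit). -/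
noncomputable def rho (p q : ℕ) (w : ℕ → ℤ) : ℝ :=
  ∑' i : ℕ, ((w i : ℝ) / q) * ((q : ℝ) / p) ^ (i + 1)

/-!
Spans are values of `S_{p/q}`: if `s` and `t` are the states of `minword n` and `maxword n`, then
`sₖ ≤ tₖ` and `t - s` is a branch of `S_{p/q}` from `0` labelled `maxword n - minword n`. These
branches form a compact set of sequences on which `ρ` is continuous, so their values form a closed
set containing every span.

Conversely, write the digits of a branch `w` of `S_{p/q}` from `0` as `bᵢ - aᵢ` with
`aᵢ ∈ {0,…,q-1}` and `bᵢ ∈ {p-q,…,p-1}`. Since such digits are determined by their residue mod `q`,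
`minword n` begins with `a₀ ⋯ a_{N-1}` as soon as `q^k ∣ p^k n + ∑_{i<k} aᵢ p^(k-1-i) q^i` for all
`k ≤ N`. This reduces to a single congruence mod `q^N`, solvable because `p` and `q` are coprime,
and the same `n` works for `b = a + w` because `w` labels a branch from `0`. So
`maxword n - minword n` agrees with `w` on a prefix of any length, and `ρ(w)` is a limit of spans.
-/

open Filter Topology

section
variable {p q : ℕ}

/-- Along a branch from `n` labelled `w`, the `k`-th state is `(p^k n + prefixValue p q w k) / q^k`;
unfolded, `prefixValue p q w k = ∑_{i<k} w i * p^(k-1-i) * q^i`. -/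
def prefixValue (p q : ℕ) (w : ℕ → ℤ) : ℕ → ℤ
  | 0 => 0
  | k + 1 => p * prefixValue p q w k + w k * q ^ k

lemma prefixValue_add (u v : ℕ → ℤ) (k : ℕ) :
    prefixValue p q (u + v) k = prefixValue p q u k + prefixValue p q v k := by
  induction k with
  | zero => simp [prefixValue]
  | succ k ih => simp only [prefixValue, ih, Pi.add_apply]; ring

lemma prefixValue_congr {u v : ℕ → ℤ} {k : ℕ} (h : ∀ i < k, u i = v i) :
    prefixValue p q u k = prefixValue p q v k := by
  induction k with
  | zero => rfl
  | succ k ih => simp only [prefixValue, ih fun i hi => h i (by omega), h k (by omega)]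

lemma continuous_prefixValue (k : ℕ) : Continuous fun w : ℕ → ℤ => prefixValue p q w k := by
  induction k with
  | zero => exact continuous_const
  | succ k ih => exact (continuous_const.mul ih).add ((continuous_apply k).mul continuous_const)

lemma IsBranch.digit_mem {E : Set ℤ} {n : ℕ} {w : ℕ → ℤ} (h : IsBranch p q E n w) (k : ℕ) :
    w k ∈ E :=
  let ⟨_, _, hs⟩ := h; (hs k).2

lemma IsBranch.exists_pow_mul_eq {E : Set ℤ} {n : ℕ} {w : ℕ → ℤ} (h : IsBranch p q E n w)
    (k : ℕ) : ∃ m : ℕ, (q : ℤ) ^ k * m = p ^ k * n + prefixValue p q w k := by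
  obtain ⟨s, hs0, hs⟩ := h
  refine ⟨s k, ?_⟩
  induction k with
  | zero => simp [prefixValue, hs0]
  | succ k ih => rw [prefixValue]; linear_combination (q : ℤ) ^ k * (hs k).1 + p * ih

lemma isBranch_iff (hq : 0 < q) {E : Set ℤ} {n : ℕ} {w : ℕ → ℤ} :
    IsBranch p q E n w ↔
      (∀ k, w k ∈ E) ∧ ∀ k, ∃ m : ℕ, (q : ℤ) ^ k * m = p ^ k * n + prefixValue p q w k := by
  refine ⟨fun h => ⟨h.digit_mem, h.exists_pow_mul_eq⟩, fun ⟨hE, hm⟩ => ?_⟩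
  choose m hm using hm
  refine ⟨m, by simpa [prefixValue] using hm 0, fun k => ⟨?_, hE k⟩⟩
  refine mul_left_cancel₀ (pow_ne_zero k (by positivity : (q : ℤ) ≠ 0)) ?_
  have hsucc := hm (k + 1)
  rw [prefixValue] at hsucc
  linear_combination hsucc - p * hm k

lemma isClosed_setOf_isBranch (hq : 0 < q) (E : Set ℤ) (n : ℕ) :
    IsClosed {w : ℕ → ℤ | IsBranch p q E n w} := by
  simp only [isBranch_iff hq, Set.ofPred_and, Set.ofPred_forall]
  exact (isClosed_iInter fun k => (isClosed_discrete E).preimage (continuous_apply k)).inter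
    (isClosed_iInter fun k =>
      (isClosed_discrete {z : ℤ | ∃ m : ℕ, (q : ℤ) ^ k * m = p ^ k * n + z}).preimage
        (continuous_prefixValue k))

lemma isCompact_setOf_isBranch (hq : 0 < q) {E : Set ℤ} (hE : E.Finite) (n : ℕ) :
    IsCompact {w : ℕ → ℤ | IsBranch p q E n w} :=
  (isCompact_univ_pi fun _ => hE.isCompact).of_isClosed_subset (isClosed_setOf_isBranch hq E n)
    fun _ hw i _ => IsBranch.digit_mem hw i

lemma eq_of_mem_Icc_of_dvd_sub {lo hi x y : ℤ} (h : hi - lo < q) (hx : x ∈ Set.Icc lo hi)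
    (hy : y ∈ Set.Icc lo hi) (hxy : (q : ℤ) ∣ x - y) : x = y := by
  obtain ⟨hx₁, hx₂⟩ := hx
  obtain ⟨hy₁, hy₂⟩ := hy
  have := Int.eq_zero_of_abs_lt_dvd hxy (by rw [abs_lt]; omega)
  omega

lemma IsBranch.eq_of_pow_dvd (hq : 0 < q) {E : Set ℤ}
    (hE : ∀ x ∈ E, ∀ y ∈ E, (q : ℤ) ∣ x - y → x = y) {n N : ℕ} {u d : ℕ → ℤ}
    (hu : IsBranch p q E n u) (hd : ∀ k < N, d k ∈ E)
    (hdvd : ∀ k ≤ N, (q : ℤ) ^ k ∣ p ^ k * n + prefixValue p q d k) :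
    ∀ k < N, u k = d k := by
  intro k
  induction k using Nat.strong_induction_on with
  | _ k ih =>
    intro hk
    have hprefix : prefixValue p q u k = prefixValue p q d k :=
      prefixValue_congr fun i hi => ih i hi (hi.trans hk)
    obtain ⟨m, hm⟩ := hu.exists_pow_mul_eq (k + 1)
    have hdiff : (q : ℤ) ^ k * (u k - d k) = (p ^ (k + 1) * n + prefixValue p q u (k + 1))
        - (p ^ (k + 1) * n + prefixValue p q d (k + 1)) := by
      simp only [prefixValue, hprefix]
      ring
    have hdvd_digit : (q : ℤ) ^ k * q ∣ (q : ℤ) ^ k * (u k - d k) := by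
      rw [← pow_succ, hdiff]
      exact (Dvd.intro _ hm).sub (hdvd (k + 1) hk)
    exact hE _ (hu.digit_mem k) _ (hd k hk)
      ((mul_dvd_mul_iff_left (pow_ne_zero k (by positivity))).1 hdvd_digit)

lemma pow_dvd_of_pow_dvd_prefixValue (hco : Nat.Coprime p q) {n : ℤ} {d : ℕ → ℤ} {N : ℕ}
    (h : (q : ℤ) ^ N ∣ p ^ N * n + prefixValue p q d N) :
    ∀ k ≤ N, (q : ℤ) ^ k ∣ p ^ k * n + prefixValue p q d k := by
  induction N with
  | zero => intro k hk; simp [Nat.le_zero.1 hk]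
  | succ N ih =>
    have hcop : IsCoprime ((q : ℤ) ^ N) p :=
      (Nat.isCoprime_iff_coprime.2 hco.symm).pow_left
    have hN : (q : ℤ) ^ N ∣ p * (p ^ N * n + prefixValue p q d N) := by
      have hsplit : p * (p ^ N * n + prefixValue p q d N)
          = (p ^ (N + 1) * n + prefixValue p q d (N + 1)) - d N * q ^ N := by
        simp only [prefixValue]
        ring
      rw [hsplit]
      exact ((pow_dvd_pow (q : ℤ) N.le_succ).trans h).sub (dvd_mul_left _ _)
    intro k hk
    rcases hk.lt_or_eq with hk | rfl
    · exact ih (hcop.dvd_of_dvd_mul_left hN) k (by omega)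
    · exact h

lemma exists_pow_dvd_prefixValue (hco : Nat.Coprime p q) (hq : 0 < q) (d : ℕ → ℤ) (N : ℕ) :
    ∃ n : ℕ, ∀ k ≤ N, (q : ℤ) ^ k ∣ p ^ k * n + prefixValue p q d k := by
  obtain ⟨x, y, hxy⟩ := (Nat.isCoprime_iff_coprime.2 hco).pow (m := N) (n := N)
  set c := -prefixValue p q d N * x
  have hc : 0 ≤ c % (q : ℤ) ^ N := Int.emod_nonneg _ (by positivity)
  refine ⟨(c % (q : ℤ) ^ N).toNat, pow_dvd_of_pow_dvd_prefixValue hco ?_⟩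
  rw [Int.toNat_of_nonneg hc, Int.emod_def]
  exact ⟨prefixValue p q d N * y - p ^ N * (c / (q : ℤ) ^ N),
    by linear_combination -prefixValue p q d N * hxy⟩

lemma exists_mem_lowAlph_add_mem_upAlph {d : ℤ} (hd : d ∈ Dalph p q) :
    ∃ a ∈ LowAlph q, a + d ∈ UpAlph p q := by
  simp only [Dalph, LowAlph, UpAlph, Set.mem_Icc] at *
  exact ⟨max 0 (p - q - d), by omega⟩

lemma exists_prefix_sub_eq (hco : Nat.Coprime p q) (hq : 0 < q) {mw mx : ℕ → ℕ → ℤ}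
    (hmw : ∀ n, IsBranch p q (LowAlph q) n (mw n))
    (hmx : ∀ n, IsBranch p q (UpAlph p q) n (mx n))
    {w : ℕ → ℤ} (hw : IsBranch p q (Dalph p q) 0 w) (N : ℕ) :
    ∃ n, ∀ i < N, mx n i - mw n i = w i := by
  choose a ha hb using fun i => exists_mem_lowAlph_add_mem_upAlph (hw.digit_mem i)
  obtain ⟨n, hn⟩ := exists_pow_dvd_prefixValue hco hq a N
  have hlow := (hmw n).eq_of_pow_dvd hq
    (fun x hx y hy => eq_of_mem_Icc_of_dvd_sub (by omega) hx hy) (fun k _ => ha k) hn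
  have hup := (hmx n).eq_of_pow_dvd hq (d := a + w)
    (fun x hx y hy => eq_of_mem_Icc_of_dvd_sub (by omega) hx hy) (fun k _ => hb k)
    fun k hk => by
      obtain ⟨t, ht⟩ := hw.exists_pow_mul_eq k
      rw [prefixValue_add, ← add_assoc]
      exact (hn k hk).add ⟨t, by simpa using ht.symm⟩
  exact ⟨n, fun i hi => by rw [hup i hi, hlow i hi, Pi.add_apply]; ring⟩

lemma isBranch_dalph_sub (hqp : q ≤ p) {n : ℕ} {u v : ℕ → ℤ}
    (hu : IsBranch p q (LowAlph q) n u) (hv : IsBranch p q (UpAlph p q) n v) :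
    IsBranch p q (Dalph p q) 0 (v - u) := by
  obtain ⟨s, hs0, hs⟩ := hu
  obtain ⟨t, ht0, ht⟩ := hv
  have hdigit : ∀ k, v k - u k ∈ Dalph p q := fun k => by
    have hu := (hs k).2
    have hv := (ht k).2
    simp only [LowAlph, UpAlph, Dalph, Set.mem_Icc] at *
    omega
  -- `q (t - s)` at the next step is `p (t - s) + (v - u) > -q`, so `t - s` stays nonnegative.
  have hle : ∀ k, s k ≤ t k := by
    intro k
    induction k with
    | zero => rw [hs0, ht0]
    | succ k ih =>
      have hd := (hdigit k).1
      have hst : (s k : ℤ) ≤ t k := by exact_mod_cast ih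
      have hqp' : (q : ℤ) ≤ p := by exact_mod_cast hqp
      have : (s (k + 1) : ℤ) ≤ t (k + 1) := by
        by_contra! hlt
        have : (q : ℤ) * t (k + 1) + q ≤ q * s (k + 1) := by nlinarith
        nlinarith [(hs k).1, (ht k).1]
      exact_mod_cast this
  refine ⟨fun k => t k - s k, by simp [hs0, ht0], fun k => ⟨?_, hdigit k⟩⟩
  push_cast [Nat.cast_sub (hle _), Pi.sub_apply]
  linear_combination (ht k).1 - (hs k).1

lemma norm_rho_term_le {a b : ℤ} {w : ℕ → ℤ} {i : ℕ} (hw : w i ∈ Set.Icc a b) :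
    ‖((w i : ℝ) / q) * ((q : ℝ) / p) ^ (i + 1)‖
      ≤ (max |a| |b| : ℤ) / q * ((q : ℝ) / p) ^ (i + 1) := by
  have hr : (0 : ℝ) ≤ ((q : ℝ) / p) ^ (i + 1) := by positivity
  rw [Real.norm_eq_abs, abs_mul, abs_div, Nat.abs_cast, abs_of_nonneg hr]
  gcongr
  exact_mod_cast abs_le_max_abs_abs hw.1 hw.2

lemma summable_const_mul_pow_succ (hpq : q < p) (C : ℝ) :
    Summable fun i : ℕ => C * ((q : ℝ) / p) ^ (i + 1) := by
  have hr : (q : ℝ) / p < 1 :=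
    (div_lt_one (by exact_mod_cast q.zero_le.trans_lt hpq)).2 (by exact_mod_cast hpq)
  exact ((summable_nat_add_iff 1).2 (summable_geometric_of_lt_one (by positivity) hr)).mul_left C

lemma summable_rho (hpq : q < p) {a b : ℤ} {w : ℕ → ℤ} (hw : ∀ i, w i ∈ Set.Icc a b) :
    Summable fun i : ℕ => ((w i : ℝ) / q) * ((q : ℝ) / p) ^ (i + 1) :=
  (summable_const_mul_pow_succ hpq _).of_norm_bounded fun i => norm_rho_term_le (hw i)

lemma rho_sub (hpq : q < p) {a b c d : ℤ} {u v : ℕ → ℤ} (hu : ∀ i, u i ∈ Set.Icc a b)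
    (hv : ∀ i, v i ∈ Set.Icc c d) : rho p q (u - v) = rho p q u - rho p q v := by
  rw [rho, rho, rho, ← (summable_rho hpq hu).tsum_sub (summable_rho hpq hv)]
  congr 1
  ext i
  push_cast [Pi.sub_apply]
  ring

lemma continuousOn_rho (hpq : q < p) (a b : ℤ) :
    ContinuousOn (rho p q) (Set.univ.pi fun _ => Set.Icc a b) := by
  rw [continuousOn_iff_continuous_domRestrict]
  refine continuous_tsum (fun i => ?_) (summable_const_mul_pow_succ hpq _)
    fun i w => norm_rho_term_le (w.2 i (Set.mem_univ i))
  exact ((continuous_of_discreteTopology.comp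
    ((continuous_apply i).comp continuous_subtype_val)).div_const _).mul continuous_const

end

theorem stmt4 (p q : ℕ) (hco : Nat.Coprime p q) (hq : 1 < q) (hpq : q < p)
    (mw mx : ℕ → ℕ → ℤ)
    (hmw : ∀ n, IsBranch p q (LowAlph q) n (mw n))
    (hmx : ∀ n, IsBranch p q (UpAlph p q) n (mx n)) :
    {x : ℝ | ∃ w : ℕ → ℤ, IsBranch p q (Dalph p q) 0 w ∧ x = rho p q w}
      = closure {x : ℝ | ∃ n : ℕ, x = rho p q (mx n) - rho p q (mw n)} := by
  have hq0 : 0 < q := zero_lt_one.trans hq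
  set B := {w : ℕ → ℤ | IsBranch p q (Dalph p q) 0 w}
  have hspan : ∀ n, rho p q (mx n) - rho p q (mw n) = rho p q (mx n - mw n) := fun n =>
    (rho_sub hpq (hmx n).digit_mem (hmw n).digit_mem).symm
  have hspan_mem : ∀ n, mx n - mw n ∈ B := fun n => isBranch_dalph_sub hpq.le (hmw n) (hmx n)
  have hρ : ContinuousOn (rho p q) B :=
    (continuousOn_rho hpq _ _).mono fun w hw i _ => IsBranch.digit_mem hw i
  have hvalues : {x : ℝ | ∃ w, IsBranch p q (Dalph p q) 0 w ∧ x = rho p q w} = rho p q '' B := by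
    ext x
    exact exists_congr fun w => and_congr_right fun _ => eq_comm
  apply subset_antisymm
  · rintro x ⟨w, hw, rfl⟩
    choose n hn using exists_prefix_sub_eq hco hq0 hmw hmx hw
    have hlim : Tendsto (fun N => mx (n N) - mw (n N)) atTop (𝓝 w) :=
      tendsto_pi_nhds.2 fun i => tendsto_atTop_of_eventually_const (i₀ := i + 1)
        fun N hN => hn N i hN
    have hlim_within : Tendsto (fun N => mx (n N) - mw (n N)) atTop (𝓝[B] w) :=
      tendsto_nhdsWithin_iff.2 ⟨hlim, .of_forall fun N => hspan_mem (n N)⟩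
    exact mem_closure_of_tendsto ((hρ w hw).tendsto.comp hlim_within)
      (.of_forall fun N => ⟨n N, (hspan _).symm⟩)
  · rw [hvalues]
    refine closure_minimal (fun x ⟨n, hx⟩ => ⟨_, hspan_mem n, (hx.trans (hspan n)).symm⟩) ?_
    exact ((isCompact_setOf_isBranch hq0 (Set.finite_Icc _ _) 0).image_of_continuousOn hρ).isClosed
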